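/- arXiv:2605.16761 — 5 statements merged into one kernel-verified Lean document; each statement's English description precedes it below -/
import Mathlib

section
/- Let γ, β, ε, A, B > 0 and f : [0,∞) → [-1,1] be measurable. Then for all L > 0 sufficiently large, the rectangle [-L,L] × [-S,S] with S = (L+β)/γ + 1 is forward invariant for the system v' = v(1 - A²/2 - B²/2 - ABf(t)) - v³/3 - w, w' = ε(v - γw + β): any solution starting in the rectangle remains in it for all positive times. -/
/-!
Each of the four edges of the rectangle is crossed inwards by the vector field: on `v = ±L` the
cubic `∓L³/3` beats the linear terms once `L` is large (the forcing coefficient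
`1 - A²/2 - B²/2 - ABf` is at most `1`, since `A² + B² ≥ 2|AB|`), and on `w = ±S` the choice of `S`
makes `v - γw + β` point inwards. A strictly inward derivative at the boundary keeps a solution
inside for a short time, and real induction on `[0, t]` turns this into forward invariance.
-/

open Filter Set Topology

theorem HasDerivWithinAt.eventually_lt_of_neg {u : ℝ → ℝ} {d τ : ℝ}
    (hd : HasDerivWithinAt u d (Ioi τ) τ) (hneg : d < 0) : ∀ᶠ t in 𝓝[>] τ, u t < u τ := by
  filter_upwards [((hasDerivWithinAt_iff_tendsto_slope' self_notMem_Ioi).1 hd).eventually_lt_const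
    hneg, self_mem_nhdsWithin] with t hslope ht
  exact (slope_neg_iff_of_le (le_of_lt ht)).1 hslope

theorem HasDerivWithinAt.eventually_le_of_eq_imp_neg {u : ℝ → ℝ} {d τ M : ℝ}
    (hd : HasDerivWithinAt u d (Ioi τ) τ) (hle : u τ ≤ M) (hM : u τ = M → d < 0) :
    ∀ᶠ t in 𝓝[>] τ, u t ≤ M := by
  rcases hle.lt_or_eq with hlt | heq
  · exact (hd.continuousWithinAt.eventually_lt_const hlt).mono fun _ ht ↦ ht.le
  · filter_upwards [hd.eventually_lt_of_neg (hM heq)] with t ht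
    exact heq ▸ ht.le

theorem HasDerivWithinAt.eventually_mem_Icc {u : ℝ → ℝ} {d τ m M : ℝ}
    (hd : HasDerivWithinAt u d (Ioi τ) τ) (hmem : u τ ∈ Icc m M)
    (hm : u τ = m → 0 < d) (hM : u τ = M → d < 0) : ∀ᶠ t in 𝓝[>] τ, u t ∈ Icc m M := by
  have hlower : ∀ᶠ t in 𝓝[>] τ, -u t ≤ -m :=
    hd.neg.eventually_le_of_eq_imp_neg (neg_le_neg hmem.1) fun h ↦ by
      linarith [hm (neg_injective h)]
  filter_upwards [hlower, hd.eventually_le_of_eq_imp_neg hmem.2 hM] with t h₁ h₂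
  exact ⟨neg_le_neg_iff.1 h₁, h₂⟩

theorem forall_ge_mem_of_eventually_nhdsGT {α X : Type*} [ConditionallyCompleteLinearOrder α]
    [TopologicalSpace α] [OrderTopology α] [DenselyOrdered α] [TopologicalSpace X]
    {x : α → X} {K : Set X} {a : α} (hK : IsClosed K) (hx : ContinuousOn x (Ici a))
    (ha : x a ∈ K) (hstep : ∀ τ ≥ a, x τ ∈ K → ∀ᶠ t in 𝓝[>] τ, x t ∈ K) :
    ∀ t ≥ a, x t ∈ K := by
  intro t ht
  have hclosed : IsClosed (x ⁻¹' K ∩ Icc a t) := by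
    rw [inter_comm]
    exact (hx.mono Icc_subset_Ici_self).preimage_isClosed_of_isClosed isClosed_Icc hK
  exact hclosed.Icc_subset_of_forall_mem_nhdsWithin ha
    (fun τ ⟨hτK, hτ⟩ ↦ hstep τ hτ.1 hτK) ⟨ht, le_rfl⟩

theorem forcing_coeff_le_one {A B x : ℝ} (hx : x ∈ Icc (-1 : ℝ) 1) :
    1 - A ^ 2 / 2 - B ^ 2 / 2 - A * B * x ≤ 1 := by
  have h : 0 ≤ B ^ 2 * (1 - x ^ 2) := mul_nonneg (sq_nonneg B) (by nlinarith [hx.1, hx.2])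
  nlinarith [sq_nonneg (A + B * x)]

theorem exists_cube_div_three_gt {γ β : ℝ} (hγ : 0 < γ) (hβ : 0 ≤ β) :
    ∃ L₀ > (0 : ℝ), ∀ L ≥ L₀, L + ((L + β) / γ + 1) < L ^ 3 / 3 := by
  set K : ℝ := 2 + (1 + β) / γ
  have hK : 0 < K := by positivity
  refine ⟨3 * K + 1, by linarith, fun L hL ↦ ?_⟩
  have hL1 : 1 ≤ L := by linarith
  have hlin : L + ((L + β) / γ + 1) ≤ L * K := by
    have : (L + β) / γ ≤ L * ((1 + β) / γ) := by
      rw [mul_div_assoc', div_le_div_iff_of_pos_right hγ]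
      nlinarith
    nlinarith
  have hsq : 3 * K < L ^ 2 := by nlinarith
  nlinarith

section FitzHughNagumo

variable {γ β ε A B L S : ℝ}

theorem fhn_v_field_neg_of_eq_right {w x : ℝ} (hx : x ∈ Icc (-1 : ℝ) 1) (hw : w ∈ Icc (-S) S)
    (hL : 0 ≤ L) (hLS : L + S < L ^ 3 / 3) :
    L * (1 - A ^ 2 / 2 - B ^ 2 / 2 - A * B * x) - L ^ 3 / 3 - w < 0 := by
  nlinarith [mul_le_mul_of_nonneg_left (forcing_coeff_le_one (A := A) (B := B) hx) hL, hw.1]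

theorem fhn_v_field_pos_of_eq_left {w x : ℝ} (hx : x ∈ Icc (-1 : ℝ) 1) (hw : w ∈ Icc (-S) S)
    (hL : 0 ≤ L) (hLS : L + S < L ^ 3 / 3) :
    0 < -L * (1 - A ^ 2 / 2 - B ^ 2 / 2 - A * B * x) - (-L) ^ 3 / 3 - w := by
  nlinarith [mul_le_mul_of_nonneg_left (forcing_coeff_le_one (A := A) (B := B) hx) hL, hw.2]

theorem fhn_w_field_neg_of_eq_right {v : ℝ} (hε : 0 < ε) (hv : v ∈ Icc (-L) L)
    (hS : L + β < γ * S) : ε * (v - γ * S + β) < 0 :=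
  mul_neg_of_pos_of_neg hε (by linarith [hv.2])

theorem fhn_w_field_pos_of_eq_left {v : ℝ} (hβ : 0 < β) (hε : 0 < ε) (hv : v ∈ Icc (-L) L)
    (hS : L + β < γ * S) : 0 < ε * (v - γ * -S + β) :=
  mul_pos hε (by linarith [hv.1])

theorem fhn_rectangle_forward_invariant {f v w : ℝ → ℝ} (hβ : 0 < β) (hε : 0 < ε)
    (hf : ∀ t, f t ∈ Icc (-1 : ℝ) 1) (hL : 0 ≤ L) (hLS : L + S < L ^ 3 / 3)
    (hS : L + β < γ * S)
    (hvw : ∀ t ≥ (0 : ℝ),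
      HasDerivAt v (v t * (1 - A ^ 2 / 2 - B ^ 2 / 2 - A * B * f t) - (v t) ^ 3 / 3 - w t) t
      ∧ HasDerivAt w (ε * (v t - γ * w t + β)) t)
    (hv0 : v 0 ∈ Icc (-L) L) (hw0 : w 0 ∈ Icc (-S) S) :
    ∀ t ≥ (0 : ℝ), v t ∈ Icc (-L) L ∧ w t ∈ Icc (-S) S := by
  have hcont : ContinuousOn (fun t ↦ (v t, w t)) (Ici 0) := fun t ht ↦
    ((hvw t ht).1.continuousAt.prodMk (hvw t ht).2.continuousAt).continuousWithinAt
  refine forall_ge_mem_of_eventually_nhdsGT (K := Icc (-L) L ×ˢ Icc (-S) S)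
    (isClosed_Icc.prod isClosed_Icc) hcont ⟨hv0, hw0⟩ fun τ hτ ⟨hvτ, hwτ⟩ ↦ ?_
  obtain ⟨hdv, hdw⟩ := hvw τ hτ
  have hv : ∀ᶠ t in 𝓝[>] τ, v t ∈ Icc (-L) L :=
    hdv.hasDerivWithinAt.eventually_mem_Icc hvτ
      (fun h ↦ h ▸ fhn_v_field_pos_of_eq_left (hf τ) hwτ hL hLS)
      (fun h ↦ h ▸ fhn_v_field_neg_of_eq_right (hf τ) hwτ hL hLS)
  have hw : ∀ᶠ t in 𝓝[>] τ, w t ∈ Icc (-S) S :=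
    hdw.hasDerivWithinAt.eventually_mem_Icc hwτ
      (fun h ↦ h ▸ fhn_w_field_pos_of_eq_left hβ hε hvτ hS)
      (fun h ↦ h ▸ fhn_w_field_neg_of_eq_right hε hvτ hS)
  exact hv.and hw

end FitzHughNagumo

theorem stmt_6_general (γ β ε A B : ℝ) (hγ : 0 < γ) (hβ : 0 < β) (hε : 0 < ε)
    (f : ℝ → ℝ)
    (hf1 : ∀ t, f t ∈ Set.Icc (-1 : ℝ) 1) :
    ∃ L₀ > (0 : ℝ), ∀ L ≥ L₀,
      let S : ℝ := (L + β) / γ + 1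
      ∀ v w : ℝ → ℝ,
        (∀ t ≥ (0 : ℝ),
          HasDerivAt v
            (v t * (1 - A ^ 2 / 2 - B ^ 2 / 2 - A * B * f t) - (v t) ^ 3 / 3 - w t) t
          ∧ HasDerivAt w (ε * (v t - γ * w t + β)) t) →
        v 0 ∈ Set.Icc (-L) L → w 0 ∈ Set.Icc (-S) S →
        ∀ t ≥ (0 : ℝ), v t ∈ Set.Icc (-L) L ∧ w t ∈ Set.Icc (-S) S := by
  obtain ⟨L₀, hL₀, hcube⟩ := exists_cube_div_three_gt hγ hβ.le
  refine ⟨L₀, hL₀, fun L hL v w hvw hv0 hw0 ↦ ?_⟩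
  have hS : L + β < γ * ((L + β) / γ + 1) := by
    rw [mul_add, mul_div_cancel₀ _ hγ.ne']
    linarith
  exact fhn_rectangle_forward_invariant hβ hε hf1 (by linarith) (hcube L hL) hS hvw hv0 hw0

theorem stmt_6 (γ β ε A B : ℝ) (hγ : 0 < γ) (hβ : 0 < β) (hε : 0 < ε)
    (hA : 0 < A) (hB : 0 < B) (f : ℝ → ℝ) (hf : Measurable f)
    (hf1 : ∀ t, f t ∈ Set.Icc (-1 : ℝ) 1) :
    ∃ L₀ > (0 : ℝ), ∀ L ≥ L₀,
      let S : ℝ := (L + β) / γ + 1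
      ∀ v w : ℝ → ℝ,
        (∀ t ≥ (0 : ℝ),
          HasDerivAt v
            (v t * (1 - A ^ 2 / 2 - B ^ 2 / 2 - A * B * f t) - (v t) ^ 3 / 3 - w t) t
          ∧ HasDerivAt w (ε * (v t - γ * w t + β)) t) →
        v 0 ∈ Set.Icc (-L) L → w 0 ∈ Set.Icc (-S) S →
        ∀ t ≥ (0 : ℝ), v t ∈ Set.Icc (-L) L ∧ w t ∈ Set.Icc (-S) S :=
  stmt_6_general γ β ε A B hγ hβ hε f hf1
end

section
/- Let r ∈ ℝ, γ, β > 0. The cubic equation v³ - 3(r - 1/γ)v + 3β/γ = 0 has exactly one real root in (-∞, 0), i.e., there is a unique negative real v with v³ - 3(r - 1/γ)v + 3β/γ = 0. -/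
/-! Substituting `p = -3 (r - 1/γ)` and `q = 3β/γ > 0`, the equation is the depressed cubic
`v³ + p v + q = 0`. It is negative far to the left and equals `q > 0` at `0`, so the intermediate
value theorem gives a negative root. Two distinct roots `v, w` force `v² + v w + w² + p = 0`, and
substituting back gives `q = v w (v + w)`, which is negative when `v, w < 0`. -/

namespace DepressedCubic

variable {p q : ℝ}

lemma eval_neg_lt_zero (hq : 0 < q) : (-(|p| + q + 1)) ^ 3 + p * (-(|p| + q + 1)) + q < 0 := by
  set M := |p| + q + 1
  have hM : 1 ≤ M := by linarith [abs_nonneg p]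
  have hpM : -p * M ≤ |p| * M := by gcongr; exact neg_le_abs p
  nlinarith [mul_le_mul_of_nonneg_left hM (by positivity : 0 ≤ M * M)]

lemma exists_neg_root (hq : 0 < q) : ∃ v < 0, v ^ 3 + p * v + q = 0 := by
  have hM : -(|p| + q + 1) ≤ 0 := by linarith [abs_nonneg p]
  have hcont : ContinuousOn (fun v : ℝ => v ^ 3 + p * v + q) (Set.Icc (-(|p| + q + 1)) 0) := by
    fun_prop
  have hzero : (0 : ℝ) ∈ Set.Ioo ((-(|p| + q + 1)) ^ 3 + p * (-(|p| + q + 1)) + q)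
      ((0 : ℝ) ^ 3 + p * 0 + q) := ⟨eval_neg_lt_zero hq, by simpa using hq⟩
  obtain ⟨v, hv, hv0⟩ := intermediate_value_Ioo hM hcont hzero
  exact ⟨v, hv.2, hv0⟩

lemma eq_of_neg_roots (hq : 0 ≤ q) {v w : ℝ} (hv : v < 0) (hw : w < 0)
    (hv0 : v ^ 3 + p * v + q = 0) (hw0 : w ^ 3 + p * w + q = 0) : v = w := by
  by_contra hne
  have hfactor : (v - w) * (v ^ 2 + v * w + w ^ 2 + p) = 0 := by linear_combination hv0 - hw0
  have hp : v ^ 2 + v * w + w ^ 2 + p = 0 :=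
    (mul_eq_zero.mp hfactor).resolve_left (sub_ne_zero.mpr hne)
  have hq_eq : q = v * w * (v + w) := by linear_combination hv0 - v * hp
  have : v * w * (v + w) < 0 := mul_neg_of_pos_of_neg (mul_pos_of_neg_of_neg hv hw) (by linarith)
  linarith

theorem existsUnique_neg_root (hq : 0 < q) : ∃! v : ℝ, v < 0 ∧ v ^ 3 + p * v + q = 0 := by
  obtain ⟨v, hv, hv0⟩ := exists_neg_root hq
  exact ⟨v, ⟨hv, hv0⟩, fun w ⟨hw, hw0⟩ => eq_of_neg_roots hq.le hw hv hw0 hv0⟩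

end DepressedCubic

theorem stmt_7 (r γ β : ℝ) (hγ : 0 < γ) (hβ : 0 < β) :
    ∃! v : ℝ, v < 0 ∧ v ^ 3 - 3 * (r - 1 / γ) * v + 3 * β / γ = 0 := by
  have hq : 0 < 3 * β / γ := by positivity
  simpa only [sub_eq_add_neg, neg_mul] using
    DepressedCubic.existsUnique_neg_root (p := -(3 * (r - 1 / γ))) hq
end

section
/- Let ε, γ > 0, r ∈ ℝ, v_e < 0 with r < v_e², and set M = (v_e² - r)²/(2v_e²). Then the sublevel set {(ṽ,w̃) : ṽ²/2 + w̃²/(2ε) ≤ M} is forward invariant for the system ṽ' = (r - v_e²)ṽ - v_e ṽ² - ṽ³/3 - w̃, w̃' = ε(ṽ - γw̃), and every solution starting in it converges to the origin as t → ∞. -/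
/-!
With `L = ṽ²/2 + w̃²/(2ε)`, the derivative of `L` along a solution is
`ṽ² (r - v_e² - v_e ṽ - ṽ²/3) - γ w̃²`. On the sublevel set `L ≤ M` we have
`ṽ² ≤ 2M = ((v_e² - r)/v_e)²`, so `r - v_e² - v_e ṽ ≤ 0` and the bracket is bounded above by a
negative constant; hence `L' ≤ -c L` there for some `c > 0`. Strict decrease of `L` on the
boundary `L = M` makes the sublevel set forward invariant, and then `L' ≤ -c L` forces
`L(t) ≤ L(0) e^{-ct} → 0`.
-/

open Filter Real Topology

theorem le_of_hasDerivAt_neg_of_eq {g g' : ℝ → ℝ} {M : ℝ}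
    (hg : ∀ t ≥ 0, HasDerivAt g (g' t) t) (hboundary : ∀ t ≥ 0, g t = M → g' t < 0)
    (h0 : g 0 ≤ M) : ∀ t ≥ 0, g t ≤ M := fun _ ht =>
  image_le_of_deriv_right_lt_deriv_boundary (B := fun _ => M)
    (fun s hs => (hg s hs.1).continuousAt.continuousWithinAt)
    (fun s hs => (hg s hs.1).hasDerivWithinAt) h0 (fun _ => hasDerivAt_const _ M)
    (fun s hs => hboundary s hs.1) ⟨ht, le_rfl⟩

theorem le_mul_exp_neg_of_hasDerivAt_le {g g' : ℝ → ℝ} {c : ℝ}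
    (hg : ∀ t ≥ 0, HasDerivAt g (g' t) t) (hdecay : ∀ t ≥ 0, g' t ≤ -c * g t) :
    ∀ t ≥ 0, g t ≤ g 0 * exp (-(c * t)) := by
  have hderiv : ∀ t ≥ 0, HasDerivAt (fun s => g s * exp (c * s))
      ((g' t + c * g t) * exp (c * t)) t := fun t ht =>
    ((hg t ht).mul (hasDerivAt_const_mul c).exp).congr_deriv (by ring)
  intro t ht
  have hweighted : g t * exp (c * t) ≤ g 0 * exp (c * 0) :=
    image_le_of_deriv_right_le_deriv_boundary (B := fun _ => g 0 * exp (c * 0))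
      (fun s hs => (hderiv s hs.1).continuousAt.continuousWithinAt)
      (fun s hs => (hderiv s hs.1).hasDerivWithinAt) le_rfl continuousOn_const
      (fun _ _ => hasDerivWithinAt_const _ _ _)
      (fun s hs => mul_nonpos_of_nonpos_of_nonneg (by linarith [hdecay s hs.1]) (exp_pos _).le)
      ⟨ht, le_rfl⟩
  rw [exp_neg, ← div_eq_mul_inv, le_div_iff₀ (exp_pos _)]
  simpa using hweighted

theorem tendsto_zero_of_sq_le {α : Type*} {l : Filter α} {f g : α → ℝ}
    (hg : Tendsto g l (𝓝 0)) (hfg : ∀ a, f a ^ 2 ≤ g a) : Tendsto f l (𝓝 0) := by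
  rw [tendsto_zero_iff_abs_tendsto_zero]
  refine squeeze_zero (fun _ => abs_nonneg _) (fun a => Real.abs_le_sqrt (hfg a)) ?_
  exact sqrt_zero ▸ (continuous_sqrt.tendsto 0).comp hg

noncomputable def lyapunov (ε x y : ℝ) : ℝ := x ^ 2 / 2 + y ^ 2 / (2 * ε)

section Lyapunov

variable {ε x y : ℝ}

theorem lyapunov_nonneg (hε : 0 ≤ ε) : 0 ≤ lyapunov ε x y := by
  unfold lyapunov; positivity

theorem sq_le_two_mul_lyapunov_left (hε : 0 ≤ ε) : x ^ 2 ≤ 2 * lyapunov ε x y := by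
  have : 0 ≤ y ^ 2 / (2 * ε) := by positivity
  unfold lyapunov; linarith

theorem sq_le_two_mul_lyapunov_right (hε : 0 < ε) : y ^ 2 ≤ 2 * ε * lyapunov ε x y := by
  have : 2 * ε * lyapunov ε x y = ε * x ^ 2 + y ^ 2 := by
    unfold lyapunov; field_simp
  nlinarith [sq_nonneg x]

theorem HasDerivAt.lyapunov {v w : ℝ → ℝ} {v' w' t : ℝ} (hv : HasDerivAt v v' t)
    (hw : HasDerivAt w w' t) :
    HasDerivAt (fun s => lyapunov ε (v s) (w s)) (v t * v' + w t * w' / ε) t :=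
  (((hv.pow 2).div_const 2).add ((hw.pow 2).div_const (2 * ε))).congr_deriv (by ring)

end Lyapunov

/-- Split at `b x = A / 2`: below it the linear part is `≤ -A/2`, above it `x > A/(2b)`. -/
theorem neg_add_mul_sub_sq_div_three_le {A b x : ℝ} (hA : 0 < A) (hb : 0 < b) (hx : b * x ≤ A) :
    -A + b * x - x ^ 2 / 3 ≤ -min (A / 2) ((A / b) ^ 2 / 12) := by
  rcases le_or_gt (b * x) (A / 2) with hsmall | hlarge
  · linarith [min_le_left (A / 2) ((A / b) ^ 2 / 12), sq_nonneg x]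
  · have hxA : A / b / 2 < x := by
      rw [div_div, div_lt_iff₀ (by positivity)]; linarith
    have hsq : (A / b / 2) ^ 2 < x ^ 2 := pow_lt_pow_left₀ hxA (by positivity) two_ne_zero
    have : -A + b * x ≤ 0 := by linarith
    linarith [min_le_right (A / 2) ((A / b) ^ 2 / 12)]

theorem exists_pos_lyapunov_deriv_le {ε γ r ve : ℝ} (hε : 0 < ε) (hγ : 0 < γ) (hve : ve < 0)
    (hr : r < ve ^ 2) :
    ∃ c > 0, ∀ x y, lyapunov ε x y ≤ (ve ^ 2 - r) ^ 2 / (2 * ve ^ 2) →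
      x * ((r - ve ^ 2) * x - ve * x ^ 2 - x ^ 3 / 3 - y) + y * (ε * (x - γ * y)) / ε
        ≤ -c * lyapunov ε x y := by
  set A := ve ^ 2 - r with hA_def
  have hA : 0 < A := sub_pos.2 hr
  have hb : 0 < -ve := neg_pos.2 hve
  set c₁ := min (A / 2) ((A / -ve) ^ 2 / 12) with hc₁_def
  have hc₁ : 0 < c₁ := lt_min (by positivity) (by positivity)
  set c := min (2 * c₁) (2 * ε * γ)
  refine ⟨c, lt_min (by positivity) (by positivity), fun x y hxy => ?_⟩
  have hx : -ve * x ≤ A := by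
    have hsq : x ^ 2 ≤ (A / -ve) ^ 2 := by
      calc x ^ 2 ≤ 2 * lyapunov ε x y := sq_le_two_mul_lyapunov_left hε.le
        _ ≤ 2 * (A ^ 2 / (2 * ve ^ 2)) := by linarith
        _ = (A / -ve) ^ 2 := by field_simp
    have := (abs_le_of_sq_le_sq' hsq (by positivity)).2
    rwa [le_div_iff₀ hb, mul_comm] at this
  have hbracket : r - ve ^ 2 - ve * x - x ^ 2 / 3 ≤ -c₁ := by
    linarith [neg_add_mul_sub_sq_div_three_le hA hb hx]
  have hderiv : x * ((r - ve ^ 2) * x - ve * x ^ 2 - x ^ 3 / 3 - y) + y * (ε * (x - γ * y)) / ε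
      = x ^ 2 * (r - ve ^ 2 - ve * x - x ^ 2 / 3) - γ * y ^ 2 := by
    field_simp; ring
  have hvterm : x ^ 2 * (r - ve ^ 2 - ve * x - x ^ 2 / 3) ≤ -(c * (x ^ 2 / 2)) := by
    have hc : c ≤ 2 * c₁ := min_le_left _ _
    nlinarith [mul_le_mul_of_nonneg_left hbracket (sq_nonneg x), sq_nonneg x]
  have hwterm : c * (y ^ 2 / (2 * ε)) ≤ γ * y ^ 2 := by
    have hc : c ≤ 2 * ε * γ := min_le_right _ _
    rw [mul_div_assoc', div_le_iff₀ (by positivity)]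
    nlinarith [sq_nonneg y]
  rw [hderiv, lyapunov]
  linarith

theorem stmt_12 (ε γ r ve : ℝ) (hε : 0 < ε) (hγ : 0 < γ)
    (hve : ve < 0) (hr : r < ve ^ 2) :
    let M : ℝ := (ve ^ 2 - r) ^ 2 / (2 * ve ^ 2)
    ∀ v w : ℝ → ℝ,
      (∀ t ≥ (0 : ℝ),
        HasDerivAt v ((r - ve ^ 2) * v t - ve * (v t) ^ 2 - (v t) ^ 3 / 3 - w t) t
        ∧ HasDerivAt w (ε * (v t - γ * w t)) t) →
      (v 0) ^ 2 / 2 + (w 0) ^ 2 / (2 * ε) ≤ M →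
      (∀ t ≥ (0 : ℝ), (v t) ^ 2 / 2 + (w t) ^ 2 / (2 * ε) ≤ M)
      ∧ Filter.Tendsto (fun t => (v t, w t)) Filter.atTop
          (nhds ((0 : ℝ), (0 : ℝ))) := by
  intro M v w hsol h0
  obtain ⟨c, hc, hdecay⟩ := exists_pos_lyapunov_deriv_le hε hγ hve hr
  have hM : 0 < M := div_pos (pow_pos (sub_pos.2 hr) 2) (by have := hve.ne; positivity)
  have hL : ∀ t ≥ 0, HasDerivAt (fun s => lyapunov ε (v s) (w s)) _ t := fun t ht =>
    (hsol t ht).1.lyapunov (hsol t ht).2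
  have hinvariant : ∀ t ≥ 0, lyapunov ε (v t) (w t) ≤ M :=
    le_of_hasDerivAt_neg_of_eq hL (fun t _ hboundary => by
      nlinarith [hdecay (v t) (w t) hboundary.le]) h0
  have hdecay_bound := le_mul_exp_neg_of_hasDerivAt_le hL fun t ht => hdecay _ _ (hinvariant t ht)
  refine ⟨hinvariant, ?_⟩
  have hL_tendsto : Tendsto (fun t => lyapunov ε (v t) (w t)) atTop (𝓝 0) := by
    refine squeeze_zero' (.of_forall fun _ => lyapunov_nonneg hε.le)
      ((eventually_ge_atTop 0).mono hdecay_bound) ?_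
    simpa using ((tendsto_exp_atBot.comp (tendsto_neg_atTop_atBot.comp
      (tendsto_id.const_mul_atTop hc))).const_mul (lyapunov ε (v 0) (w 0)))
  exact (tendsto_zero_of_sq_le (by simpa using hL_tendsto.const_mul 2)
    fun _ => sq_le_two_mul_lyapunov_left hε.le).prodMk_nhds
    (tendsto_zero_of_sq_le (by simpa using hL_tendsto.const_mul (2 * ε))
    fun _ => sq_le_two_mul_lyapunov_right hε)
end

section
/- Let A, B > 0 with A + B < √2 and suppose that for each c ∈ [-1,1] the curves {w = r(c)v - v³/3} and {w = (v+β)/γ} (γ, β > 0) admit a unique intersection point (v_e(c), w_e(c)) with v_e(c) < 0. Then v_e and w_e are monotonically increasing functions of c on [-1,1]. -/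
/-!
Substituting the line `w = (v + β) / γ` into the cubic and dividing by `v < 0` turns the
intersection condition into `γ r(c) - 1 = β / v + γ v² / 3`. The right-hand side is strictly
decreasing in `v < 0`, while the left-hand side is decreasing in `c` because `AB > 0`;
hence `v_e` increases with `c`, and so does `w_e = (v_e + β) / γ`.
-/

open Set

theorem MonotoneOn.of_strictAntiOn_comp {α β γ : Type*} [Preorder α] [LinearOrder β]
    [Preorder γ] {f : α → β} {g : β → γ} {s : Set α} {t : Set β}
    (hg : StrictAntiOn g t) (hf : MapsTo f s t) (hgf : AntitoneOn (g ∘ f) s) :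
    MonotoneOn f s := fun _ ha _ hb hab =>
  (hg.le_iff_ge (hf hb) (hf ha)).1 (hgf ha hb hab)

lemma strictAntiOn_div_add_mul_sq {β γ : ℝ} (hβ : 0 < β) (hγ : 0 ≤ γ) :
    StrictAntiOn (fun v : ℝ => β / v + γ * v ^ 2 / 3) (Iio 0) := by
  intro a (ha : a < 0) b (hb : b < 0) hab
  have hdiv : β / b < β / a := by
    simpa only [div_eq_mul_inv] using mul_lt_mul_of_pos_left ((inv_lt_inv_of_neg hb ha).2 hab) hβ
  have hsq : γ * b ^ 2 ≤ γ * a ^ 2 := mul_le_mul_of_nonneg_left (by nlinarith) hγ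
  dsimp only
  linarith

lemma mul_eq_one_add_of_intersection {r v β γ : ℝ} (hγ : γ ≠ 0) (hv : v ≠ 0)
    (h : r * v - v ^ 3 / 3 = (v + β) / γ) :
    γ * r = 1 + (β / v + γ * v ^ 2 / 3) := by
  field_simp at h ⊢
  linear_combination h

theorem stmt_13_general (A B γ β : ℝ) (hA : 0 < A) (hB : 0 < B)
    (hγ : 0 < γ) (hβ : 0 < β)
    (ve we : ℝ → ℝ)
    (hmem : ∀ c ∈ Set.Icc (-1 : ℝ) 1,
      we c = (1 - A ^ 2 / 2 - B ^ 2 / 2 - c * A * B) * ve c - (ve c) ^ 3 / 3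
      ∧ we c = (ve c + β) / γ ∧ ve c < 0) :
    MonotoneOn ve (Set.Icc (-1) 1) ∧ MonotoneOn we (Set.Icc (-1) 1) := by
  have hve : MonotoneOn ve (Icc (-1) 1) := by
    refine .of_strictAntiOn_comp (strictAntiOn_div_add_mul_sq hβ hγ.le)
      (fun c hc => (hmem c hc).2.2) fun c₁ hc₁ c₂ hc₂ hc => ?_
    obtain ⟨hcubic₁, hline₁, hv₁⟩ := hmem c₁ hc₁
    obtain ⟨hcubic₂, hline₂, hv₂⟩ := hmem c₂ hc₂
    have e₁ := mul_eq_one_add_of_intersection hγ.ne' hv₁.ne (hcubic₁.symm.trans hline₁)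
    have e₂ := mul_eq_one_add_of_intersection hγ.ne' hv₂.ne (hcubic₂.symm.trans hline₂)
    have hr : γ * (c₁ * A * B) ≤ γ * (c₂ * A * B) := by gcongr
    simp only [Function.comp_apply]
    linarith
  refine ⟨hve, fun c₁ hc₁ c₂ hc₂ hc => ?_⟩
  rw [(hmem c₁ hc₁).2.1, (hmem c₂ hc₂).2.1]
  gcongr
  exact hve hc₁ hc₂ hc

theorem stmt_13 (A B γ β : ℝ) (hA : 0 < A) (hB : 0 < B)
    (hAB : A + B < Real.sqrt 2) (hγ : 0 < γ) (hβ : 0 < β)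
    (ve we : ℝ → ℝ)
    (huniq : ∀ c ∈ Set.Icc (-1 : ℝ) 1,
      ∃! p : ℝ × ℝ,
        p.2 = (1 - A ^ 2 / 2 - B ^ 2 / 2 - c * A * B) * p.1 - p.1 ^ 3 / 3
        ∧ p.2 = (p.1 + β) / γ)
    (hmem : ∀ c ∈ Set.Icc (-1 : ℝ) 1,
      we c = (1 - A ^ 2 / 2 - B ^ 2 / 2 - c * A * B) * ve c - (ve c) ^ 3 / 3
      ∧ we c = (ve c + β) / γ ∧ ve c < 0) :
    MonotoneOn ve (Set.Icc (-1) 1) ∧ MonotoneOn we (Set.Icc (-1) 1) :=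
  stmt_13_general A B γ β hA hB hγ hβ ve we hmem
end

section
/- Let γ, β, κ, A, B > 0 and c ∈ (-1,1) with r(c) := 1 - A²/2 - B²/2 - cAB > 0. Set v_m(c) = -√(r(c)), w_m(c) = -(2/3)r(c)^{3/2}. If v_m(c)·ABκ·√(1-c²) > v_m(c) - γ·w_m(c) + β, then there is no C¹ function s ↦ (v(s), w(s)) on any interval [s₀, s₀+δ], δ > 0, satisfying 0 = v(s)·r(cos(κs)) - v(s)³/3 - w(s), dw/ds = v - γw + β, v(s₀) = v_m(c), w(s₀) = w_m(c), and v(s) ≤ v_m(cos(κs)) for all s, where cos(κs₀) = c and sin(κs₀) > 0. -/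
/-!
On the left branch `v ≤ -√r` the slow variable `w = v r - v³/3` lies above the fold value
`w_m(r) = -(2/3) r^{3/2}`, with equality at `s₀`. Hence `w - w_m(r(s))` has a right-local minimum at
`s₀`, so its derivative there is nonnegative; but that derivative is
`v_m - γ w_m + β - v_m AB κ √(1 - c²) < 0` by the escaping condition.
-/

open Filter Set Topology

/-- For `r ≥ 0`: `x r - x³/3 + (2/3) √r³ = (x + √r)² (2√r - x) / 3`. -/
theorem neg_two_thirds_mul_sqrt_pow_three_le {r x : ℝ} (hx : x ≤ -√r) :
    -(2 / 3) * √r ^ 3 ≤ x * r - x ^ 3 / 3 := by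
  rcases le_or_gt r 0 with hr | hr
  · rw [Real.sqrt_eq_zero_of_nonpos hr] at hx ⊢
    nlinarith [mul_nonneg_of_nonpos_of_nonpos (by linarith : x ≤ 0) hr,
      pow_nonneg (by linarith : 0 ≤ -x) 3]
  · have hsq : √r ^ 2 = r := Real.sq_sqrt hr.le
    have hnn : 0 ≤ √r := Real.sqrt_nonneg r
    nlinarith [mul_nonneg (sq_nonneg (x + √r)) (by linarith : 0 ≤ 2 * √r - x)]

theorem IsLocalMinOn.hasDerivWithinAt_nonneg {f : ℝ → ℝ} {f' a : ℝ} {s : Set ℝ}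
    (h : IsLocalMinOn f s a) (hs : ∃ᶠ x in 𝓝[>] a, x ∈ s) (hf : HasDerivWithinAt f f' s a) :
    0 ≤ f' := by
  simpa using h.hasFDerivWithinAt_nonneg hf (one_mem_posTangentConeAt_iff_frequently.2 hs)

theorem HasDerivAt.sqrt_pow_three {f : ℝ → ℝ} {f' x : ℝ} (hf : HasDerivAt f f' x)
    (hx : f x ≠ 0) : HasDerivAt (fun y => √(f y) ^ 3) (3 / 2 * √(f x) * f') x := by
  refine ((hf.sqrt hx).fun_pow 3).congr_deriv ?_
  rcases eq_or_ne √(f x) 0 with h | h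
  · simp [h]
  · field_simp
    ring

theorem stmt_18_general (γ β κ A B c s₀ : ℝ)
    (hr : 0 < 1 - A ^ 2 / 2 - B ^ 2 / 2 - c * A * B)
    (hs₀c : Real.cos (κ * s₀) = c) (hs₀s : 0 < Real.sin (κ * s₀))
    (hesc :
      (-Real.sqrt (1 - A ^ 2 / 2 - B ^ 2 / 2 - c * A * B)) * (A * B) * κ
          * Real.sqrt (1 - c ^ 2)
        > (-Real.sqrt (1 - A ^ 2 / 2 - B ^ 2 / 2 - c * A * B))
          - γ * (-(2 / 3) * Real.sqrt (1 - A ^ 2 / 2 - B ^ 2 / 2 - c * A * B) ^ 3)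
          + β) :
    ¬ ∃ δ > (0 : ℝ), ∃ v w : ℝ → ℝ,
      ContDiffOn ℝ 1 v (Set.Icc s₀ (s₀ + δ)) ∧
      ContDiffOn ℝ 1 w (Set.Icc s₀ (s₀ + δ)) ∧
      (∀ s ∈ Set.Icc s₀ (s₀ + δ),
        v s * (1 - A ^ 2 / 2 - B ^ 2 / 2 - Real.cos (κ * s) * A * B)
            - (v s) ^ 3 / 3 - w s = 0
        ∧ HasDerivAt w (v s - γ * w s + β) s
        ∧ v s ≤ -Real.sqrt (1 - A ^ 2 / 2 - B ^ 2 / 2 - Real.cos (κ * s) * A * B))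
      ∧ v s₀ = -Real.sqrt (1 - A ^ 2 / 2 - B ^ 2 / 2 - c * A * B)
      ∧ w s₀ = -(2 / 3) * Real.sqrt (1 - A ^ 2 / 2 - B ^ 2 / 2 - c * A * B) ^ 3 := by
  rintro ⟨δ, hδ, v, w, -, -, hsys, hv₀, hw₀⟩
  set r : ℝ → ℝ := fun s => 1 - A ^ 2 / 2 - B ^ 2 / 2 - Real.cos (κ * s) * A * B with hr_def
  have hr₀ : r s₀ = 1 - A ^ 2 / 2 - B ^ 2 / 2 - c * A * B := by simp only [hr_def, hs₀c]
  have hsin : Real.sin (κ * s₀) = √(1 - c ^ 2) := by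
    rw [← hs₀c, ← Real.abs_sin_eq_sqrt_one_sub_cos_sq, abs_of_pos hs₀s]
  have hr' : HasDerivAt r (A * B * κ * Real.sin (κ * s₀)) s₀ := by
    refine ((((hasDerivAt_id s₀).const_mul κ).cos.mul_const A).mul_const B
      |>.const_sub (1 - A ^ 2 / 2 - B ^ 2 / 2)).congr_deriv ?_
    simp only [id_eq, mul_one]
    ring
  have hwm' := (hr'.sqrt_pow_three (hr₀ ▸ hr.ne')).const_mul (-(2 / 3))
  have hs₀ : s₀ ∈ Icc s₀ (s₀ + δ) := ⟨le_rfl, by linarith⟩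
  have hmin : IsLocalMinOn (fun s => w s - -(2 / 3) * √(r s) ^ 3) (Icc s₀ (s₀ + δ)) s₀ := by
    filter_upwards [self_mem_nhdsWithin] with s hs
    obtain ⟨hslow, -, hleft⟩ := hsys s hs
    have hfold := neg_two_thirds_mul_sqrt_pow_three_le hleft
    simp only [hw₀, hr₀, sub_self]
    linarith
  have hfreq : ∃ᶠ x in 𝓝[>] s₀, x ∈ Icc s₀ (s₀ + δ) :=
    Eventually.frequently (mem_of_superset (Ioo_mem_nhdsGT (by linarith)) Ioo_subset_Icc_self)
  have hderiv := hmin.hasDerivWithinAt_nonneg hfreq ((hsys s₀ hs₀).2.1.sub hwm').hasDerivWithinAt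
  rw [hv₀, hw₀, hr₀, hsin] at hderiv
  linarith

theorem stmt_18 (γ β κ A B c s₀ : ℝ) (hγ : 0 < γ) (hβ : 0 < β) (hκ : 0 < κ)
    (hA : 0 < A) (hB : 0 < B) (hc : c ∈ Set.Ioo (-1 : ℝ) 1)
    (hr : 0 < 1 - A ^ 2 / 2 - B ^ 2 / 2 - c * A * B)
    (hs₀c : Real.cos (κ * s₀) = c) (hs₀s : 0 < Real.sin (κ * s₀))
    (hesc :
      (-Real.sqrt (1 - A ^ 2 / 2 - B ^ 2 / 2 - c * A * B)) * (A * B) * κ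
          * Real.sqrt (1 - c ^ 2)
        > (-Real.sqrt (1 - A ^ 2 / 2 - B ^ 2 / 2 - c * A * B))
          - γ * (-(2 / 3) * Real.sqrt (1 - A ^ 2 / 2 - B ^ 2 / 2 - c * A * B) ^ 3)
          + β) :
    ¬ ∃ δ > (0 : ℝ), ∃ v w : ℝ → ℝ,
      ContDiffOn ℝ 1 v (Set.Icc s₀ (s₀ + δ)) ∧
      ContDiffOn ℝ 1 w (Set.Icc s₀ (s₀ + δ)) ∧
      (∀ s ∈ Set.Icc s₀ (s₀ + δ),
        v s * (1 - A ^ 2 / 2 - B ^ 2 / 2 - Real.cos (κ * s) * A * B)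
            - (v s) ^ 3 / 3 - w s = 0
        ∧ HasDerivAt w (v s - γ * w s + β) s
        ∧ v s ≤ -Real.sqrt (1 - A ^ 2 / 2 - B ^ 2 / 2 - Real.cos (κ * s) * A * B))
      ∧ v s₀ = -Real.sqrt (1 - A ^ 2 / 2 - B ^ 2 / 2 - c * A * B)
      ∧ w s₀ = -(2 / 3) * Real.sqrt (1 - A ^ 2 / 2 - B ^ 2 / 2 - c * A * B) ^ 3 :=
  stmt_18_general γ β κ A B c s₀ hr hs₀c hs₀s hesc
end
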